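/- arXiv:1310.0974 — 4 statements merged into one kernel-verified Lean document; each statement's English description precedes it below -/
import Mathlib

section
/- Let J : (a,b) → ℝ be measurable with J ≥ α > 0 a.e. and 1/J locally integrable, and let F be a primitive of 1/J on (a,b). Then F is continuous, strictly increasing from (a,b) onto (F(a⁺),F(b⁻)), and its inverse F⁻¹ is locally absolutely continuous with (F⁻¹)' = J ∘ F⁻¹ a.e. -/
open MeasureTheory Set

/-- If `J ≥ α > 0` a.e. on `(a,b)` with `1/J` locally integrable, and `F` is a
primitive of `1/J`, then `F` is continuous and strictly increasing on `(a,b)`,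
and its inverse `G` is locally absolutely continuous with `G' = J ∘ G` a.e.
(expressed through the integral formula `G v - G u = ∫_u^v J(G(s)) ds`). -/
theorem primitive_of_inv_J (a b α : ℝ) (hab : a < b) (hα : 0 < α)
    (J F : ℝ → ℝ) (hJm : Measurable J)
    (hJα : ∀ᵐ x ∂(volume.restrict (Ioo a b)), α ≤ J x)
    (hloc : LocallyIntegrableOn (fun x => 1 / J x) (Ioo a b))
    (hF : ∀ x ∈ Ioo a b, ∀ y ∈ Ioo a b, F y - F x = ∫ t in x..y, 1 / J t) :
    ContinuousOn F (Ioo a b) ∧ StrictMonoOn F (Ioo a b) ∧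
    ∃ G : ℝ → ℝ,
      (∀ x ∈ Ioo a b, G (F x) = x) ∧
      (∀ u ∈ F '' Ioo a b, ∀ v ∈ F '' Ioo a b,
        G v - G u = ∫ s in u..v, J (G s)) := by
  -- a.e. lower bound as a plain statement
  have hJae : ∀ᵐ t : ℝ ∂volume, t ∈ Ioo a b → α ≤ J t :=
    (ae_restrict_iff' measurableSet_Ioo).mp hJα
  -- integrability on compact subintervals
  have hint : ∀ {p q : ℝ}, p ∈ Ioo a b → q ∈ Ioo a b →
      IntegrableOn (fun t => 1 / J t) (Icc p q) volume := by
    intro p q hp hq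
    exact hloc.integrableOn_compact_subset (Icc_subset_Ioo hp.1 hq.2) isCompact_Icc
  -- strict monotonicity
  have hmono : StrictMonoOn F (Ioo a b) := by
    intro x hx y hy hxy
    have h1 : F y - F x = ∫ t in x..y, 1 / J t := hF x hx y hy
    have hIccsub : Icc x y ⊆ Ioo a b := Icc_subset_Ioo hx.1 hy.2
    have hIocsub : Ioc x y ⊆ Ioo a b := fun t ht => hIccsub (Ioc_subset_Icc_self ht)
    have hIntOn : IntegrableOn (fun t => 1 / J t) (Ioc x y) volume :=
      (hint hx hy).mono_set Ioc_subset_Icc_self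
    have hnn : 0 ≤ᵐ[volume.restrict (Ioc x y)] fun t => 1 / J t := by
      refine (ae_restrict_iff' measurableSet_Ioc).mpr ?_
      filter_upwards [hJae] with t h ht
      exact le_of_lt (div_pos one_pos (lt_of_lt_of_le hα (h (hIocsub ht))))
    have hpos : 0 < ∫ t in Ioc x y, 1 / J t := by
      rw [setIntegral_pos_iff_support_of_nonneg_ae hnn hIntOn]
      have hsub : ∀ᵐ t : ℝ ∂volume, t ∈ Ioc x y →
          t ∈ Function.support (fun t => 1 / J t) ∩ Ioc x y := by
        filter_upwards [hJae] with t h ht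
        refine ⟨?_, ht⟩
        have : 0 < 1 / J t := div_pos one_pos (lt_of_lt_of_le hα (h (hIocsub ht)))
        exact ne_of_gt this
      have hle : volume (Ioc x y) ≤
          volume (Function.support (fun t => 1 / J t) ∩ Ioc x y) :=
        measure_mono_ae hsub
      have : (0 : ENNReal) < volume (Ioc x y) := by
        rw [Real.volume_Ioc]
        exact ENNReal.ofReal_pos.mpr (by linarith)
      exact lt_of_lt_of_le this hle
    have : 0 < F y - F x := by
      rw [h1, intervalIntegral.integral_of_le hxy.le]; exact hpos
    linarith
  -- continuity
  have hcont : ContinuousOn F (Ioo a b) := by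
    intro y hy
    obtain ⟨c, hc, hcy⟩ : ∃ c, c ∈ Ioo a b ∧ c < y :=
      ⟨(a + y) / 2, ⟨by linarith [hy.1], by linarith [hy.1, hy.2]⟩, by linarith [hy.1]⟩
    obtain ⟨d, hd, hyd⟩ : ∃ d, d ∈ Ioo a b ∧ y < d :=
      ⟨(y + b) / 2, ⟨by linarith [hy.1, hy.2], by linarith [hy.2]⟩, by linarith [hy.2]⟩
    have hcd : c ≤ d := by linarith
    have hIcd : IntegrableOn (fun t => 1 / J t) (uIcc c d) volume := by
      rw [uIcc_of_le hcd]; exact hint hc hd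
    have hcont' : ContinuousOn (fun t => F c + ∫ s in c..t, 1 / J s) (uIcc c d) :=
      continuousOn_const.add (intervalIntegral.continuousOn_primitive_interval hIcd)
    have hIccsub : Icc c d ⊆ Ioo a b := Icc_subset_Ioo hc.1 hd.2
    have hx : ContinuousAt (fun t => F c + ∫ s in c..t, 1 / J s) y := by
      refine hcont'.continuousAt ?_
      rw [uIcc_of_le hcd]
      exact Icc_mem_nhds hcy hyd
    have heq : (fun t => F c + ∫ s in c..t, 1 / J s) =ᶠ[nhds y] F := by
      filter_upwards [Ioo_mem_nhds hcy hyd] with t ht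
      have := hF c hc t (hIccsub ⟨ht.1.le, ht.2.le⟩)
      linarith
    exact (hx.congr heq).continuousWithinAt
  refine ⟨hcont, hmono, ?_⟩
  -- the inverse function, defined globally and monotone
  set G : ℝ → ℝ := fun v => sInf ({t | t ∈ Ioo a b ∧ v ≤ F t} ∪ {b}) with hGdef
  have hbdd : ∀ v : ℝ, BddBelow ({t | t ∈ Ioo a b ∧ v ≤ F t} ∪ {b}) := by
    intro v
    refine ⟨a, ?_⟩
    rintro t (⟨ht, -⟩ | rfl)
    · exact ht.1.le
    · exact hab.le
  have hne : ∀ v : ℝ, ({t | t ∈ Ioo a b ∧ v ≤ F t} ∪ {b} : Set ℝ).Nonempty :=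
    fun v => ⟨b, Or.inr rfl⟩
  have hGmono : Monotone G := by
    intro v₁ v₂ h
    refine csInf_le_csInf (hbdd v₁) (hne v₂) ?_
    rintro t (⟨ht, hFt⟩ | rfl)
    · exact Or.inl ⟨ht, le_trans h hFt⟩
    · exact Or.inr rfl
  have hGF : ∀ x ∈ Ioo a b, G (F x) = x := by
    intro x hx
    refine le_antisymm (csInf_le (hbdd _) (Or.inl ⟨hx, le_rfl⟩)) ?_
    refine le_csInf (hne _) ?_
    rintro t (⟨ht, hFt⟩ | rfl)
    · by_contra h
      push_neg at h
      exact absurd hFt (not_le.mpr (hmono ht hx h))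
    · exact hx.2.le
  have hGmeas : Measurable G := hGmono.measurable
  refine ⟨G, hGF, ?_⟩
  -- key identity for x < y
  have key : ∀ x ∈ Ioo a b, ∀ y ∈ Ioo a b, x < y →
      y - x = ∫ s in (F x)..(F y), J (G s) := by
    intro x hx y hy hxy
    have huv : F x < F y := hmono hx hy hxy
    have hIccsub : Icc x y ⊆ Ioo a b := Icc_subset_Ioo hx.1 hy.2
    have hIocsub : Ioc x y ⊆ Ioo a b := fun t ht => hIccsub (Ioc_subset_Icc_self ht)
    set ν : Measure ℝ := volume.restrict (Ioc x y) with hνdef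
    set μ : Measure ℝ := ν.withDensity (fun t => ENNReal.ofReal (1 / J t)) with hμdef
    have hdmeas : Measurable (fun t => ENNReal.ofReal (1 / J t)) :=
      (measurable_const.div hJm).ennreal_ofReal
    -- computing μ on Ioc x q
    have L1 : ∀ q ∈ Icc x y, μ (Ioc x q) = ENNReal.ofReal (F q - F x) := by
      intro q hq
      have hq' : q ∈ Ioo a b := hIccsub hq
      have hIntOn : IntegrableOn (fun t => 1 / J t) (Ioc x q) volume :=
        (hint hx hy).mono_set (fun t ht => ⟨ht.1.le, le_trans ht.2 hq.2⟩)
      have hnn : 0 ≤ᵐ[volume.restrict (Ioc x q)] fun t => 1 / J t := by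
        refine (ae_restrict_iff' measurableSet_Ioc).mpr ?_
        filter_upwards [hJae] with t h ht
        have ht' : t ∈ Ioo a b := hIocsub ⟨ht.1, le_trans ht.2 hq.2⟩
        exact le_of_lt (div_pos one_pos (lt_of_lt_of_le hα (h ht')))
      rw [hμdef, withDensity_apply _ measurableSet_Ioc, hνdef,
        Measure.restrict_restrict measurableSet_Ioc]
      have hinter : Ioc x q ∩ Ioc x y = Ioc x q := by
        rw [inter_eq_left]
        exact fun t ht => ⟨ht.1, le_trans ht.2 hq.2⟩
      rw [hinter, ← ofReal_integral_eq_lintegral_ofReal hIntOn hnn]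
      congr 1
      have := hF x hx q hq'
      rw [this, intervalIntegral.integral_of_le hq.1]
    have hμuniv : μ Set.univ = ENNReal.ofReal (F y - F x) := by
      have h1 := L1 y ⟨hxy.le, le_rfl⟩
      rw [← h1, hμdef, withDensity_apply _ MeasurableSet.univ,
        withDensity_apply _ measurableSet_Ioc, hνdef,
        Measure.restrict_restrict measurableSet_Ioc, inter_self,
        Measure.restrict_univ]
    haveI hμfin : IsFiniteMeasure μ := ⟨by rw [hμuniv]; exact ENNReal.ofReal_lt_top⟩
    -- F is a.e. measurable w.r.t. μ
    have hFν : AEMeasurable F ν := by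
      have h1 : AEMeasurable F (volume.restrict (Ioo a b)) :=
        hcont.aemeasurable measurableSet_Ioo
      exact h1.mono_measure (Measure.restrict_mono hIocsub le_rfl)
    have hFμ : AEMeasurable F μ :=
      hFν.mono_ac (withDensity_absolutelyContinuous ν _)
    -- μ vanishes outside Ioc x y
    have hcompl : μ (Ioc x y)ᶜ = 0 := by
      rw [hμdef, withDensity_apply _ measurableSet_Ioc.compl, hνdef,
        Measure.restrict_restrict measurableSet_Ioc.compl, compl_inter_self,
        Measure.restrict_empty, lintegral_zero_measure]
    have hμinter : ∀ S : Set ℝ, μ S = μ (S ∩ Ioc x y) := by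
      intro S
      refine le_antisymm ?_ (measure_mono inter_subset_left)
      calc μ S ≤ μ ((S ∩ Ioc x y) ∪ (Ioc x y)ᶜ) :=
            measure_mono (fun t ht => by
              by_cases h : t ∈ Ioc x y
              · exact Or.inl ⟨ht, h⟩
              · exact Or.inr h)
        _ ≤ μ (S ∩ Ioc x y) + μ (Ioc x y)ᶜ := measure_union_le _ _
        _ = μ (S ∩ Ioc x y) := by rw [hcompl, add_zero]
    -- the pushforward of μ under F is Lebesgue on Ioc (F x) (F y)
    have hmap : Measure.map F μ = volume.restrict (Ioc (F x) (F y)) := by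
      haveI : IsFiniteMeasure (Measure.map F μ) := by
        constructor
        rw [Measure.map_apply_of_aemeasurable hFμ MeasurableSet.univ, preimage_univ]
        exact measure_lt_top μ _
      refine Measure.ext_of_Iic _ _ (fun t => ?_)
      rw [Measure.map_apply_of_aemeasurable hFμ measurableSet_Iic,
        Measure.restrict_apply measurableSet_Iic, hμinter]
      rcases lt_or_ge t (F x) with h1 | h1
      · -- t < F x : both sides are 0
        have hempty : F ⁻¹' Iic t ∩ Ioc x y = ∅ := by
          ext s
          simp only [mem_inter_iff, mem_preimage, mem_Iic, mem_Ioc, mem_empty_iff_false,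
            iff_false, not_and, and_imp]
          intro hs h2 h3
          have : F x < F s := hmono hx (hIocsub ⟨h2, h3⟩) h2
          linarith
        have hempty2 : Iic t ∩ Ioc (F x) (F y) = ∅ := by
          ext s
          simp only [mem_inter_iff, mem_Iic, mem_Ioc, mem_empty_iff_false, iff_false,
            not_and, and_imp]
          intro hs h2 h3
          linarith
        rw [hempty, hempty2, measure_empty, measure_empty]
      rcases lt_or_ge t (F y) with h2 | h2
      · -- F x ≤ t < F y : use IVT to find q with F q = t
        obtain ⟨q, hq, hFq⟩ : ∃ q ∈ Icc x y, F q = t := by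
          have hivt := intermediate_value_Icc hxy.le (hcont.mono hIccsub)
          obtain ⟨q, hq, hFq⟩ := hivt ⟨h1, h2.le⟩
          exact ⟨q, hq, hFq⟩
        have hq' : q ∈ Ioo a b := hIccsub hq
        have hWeq : F ⁻¹' Iic t ∩ Ioc x y = Ioc x q := by
          ext s
          simp only [mem_inter_iff, mem_preimage, mem_Iic, mem_Ioc]
          constructor
          · rintro ⟨hFs, hs1, hs2⟩
            refine ⟨hs1, ?_⟩
            by_contra h
            push_neg at h
            have : F q < F s := hmono hq' (hIocsub ⟨hs1, hs2⟩) h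
            rw [hFq] at this
            linarith
          · rintro ⟨hs1, hs2⟩
            have hs' : s ∈ Ioo a b := hIocsub ⟨hs1, le_trans hs2 hq.2⟩
            refine ⟨?_, hs1, le_trans hs2 hq.2⟩
            rcases eq_or_lt_of_le hs2 with rfl | h
            · exact hFq.le
            · have : F s < F q := hmono hs' hq' h
              rw [hFq] at this
              exact this.le
        rw [hWeq, L1 q hq, hFq]
        have hinter2 : Iic t ∩ Ioc (F x) (F y) = Ioc (F x) t := by
          ext s
          simp only [mem_inter_iff, mem_Iic, mem_Ioc]
          constructor
          · rintro ⟨hs, hs1, hs2⟩; exact ⟨hs1, hs⟩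
          · rintro ⟨hs1, hs2⟩; exact ⟨hs2, hs1, by linarith⟩
        rw [hinter2, Real.volume_Ioc]
      · -- F y ≤ t : whole interval
        have hWeq : F ⁻¹' Iic t ∩ Ioc x y = Ioc x y := by
          rw [inter_eq_right]
          intro s hs
          have hs' : s ∈ Ioo a b := hIocsub hs
          simp only [mem_preimage, mem_Iic]
          rcases eq_or_lt_of_le hs.2 with rfl | h
          · exact h2
          · exact le_trans (hmono hs' hy h).le h2
        have hinter2 : Iic t ∩ Ioc (F x) (F y) = Ioc (F x) (F y) := by
          rw [inter_eq_right]
          exact fun s hs => le_trans hs.2 h2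
        rw [hWeq, hinter2, L1 y ⟨hxy.le, le_rfl⟩, Real.volume_Ioc]
    -- now compute the integral
    have hJGmeas : Measurable (fun s => J (G s)) := hJm.comp hGmeas
    have step1 : ∫ s in (F x)..(F y), J (G s) = ∫ s, J (G s) ∂(Measure.map F μ) := by
      rw [intervalIntegral.integral_of_le huv.le, hmap]
    have step2 : ∫ s, J (G s) ∂(Measure.map F μ) = ∫ t, J (G (F t)) ∂μ :=
      integral_map hFμ hJGmeas.aestronglyMeasurable
    have hdens : μ = ν.withDensity (fun t => ((1 / J t).toNNReal : ENNReal)) := rfl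
    have step3 : ∫ t, J (G (F t)) ∂μ
        = ∫ t, ((1 / J t).toNNReal : NNReal) • J (G (F t)) ∂ν := by
      rw [hdens]
      exact integral_withDensity_eq_integral_smul
        ((measurable_const.div hJm).real_toNNReal) _
    have step4 : ∫ t, ((1 / J t).toNNReal : NNReal) • J (G (F t)) ∂ν
        = ∫ t, (1 : ℝ) ∂ν := by
      refine integral_congr_ae ?_
      have hmem : ∀ᵐ t ∂ν, t ∈ Ioc x y := ae_restrict_mem measurableSet_Ioc
      have hJν : ∀ᵐ t ∂ν, t ∈ Ioo a b → α ≤ J t := ae_restrict_of_ae hJae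
      filter_upwards [hmem, hJν] with t ht hJt
      have ht' : t ∈ Ioo a b := hIocsub ht
      have hJpos : 0 < J t := lt_of_lt_of_le hα (hJt ht')
      have h1 : G (F t) = t := hGF t ht'
      rw [h1, NNReal.smul_def, Real.coe_toNNReal _ (le_of_lt (div_pos one_pos hJpos))]
      rw [smul_eq_mul, one_div, inv_mul_cancel₀ hJpos.ne']
    have step5 : ∫ t, (1 : ℝ) ∂ν = y - x := by
      rw [hνdef, integral_const, measureReal_def, Measure.restrict_apply MeasurableSet.univ, univ_inter,
        Real.volume_Ioc, smul_eq_mul, mul_one, ENNReal.toReal_ofReal (by linarith)]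
    rw [step1, step2, step3, step4, step5]
  -- conclude
  rintro u ⟨x, hx, rfl⟩ v ⟨y, hy, rfl⟩
  rcases lt_trichotomy x y with h | h | h
  · rw [hGF x hx, hGF y hy]
    exact key x hx y hy h
  · subst h
    rw [sub_self, intervalIntegral.integral_same]
  · rw [hGF x hx, hGF y hy]
    have := key y hy x hx h
    rw [intervalIntegral.integral_symm]
    linarith
end

section
/- Let a < b be reals, l = b − a, and let Φ₊, Φ₋ : ℝ → ℝ be measurable functions satisfying the reflection conditions Φ₊(b−t) = Φ₋(b+t) and Φ₊(a−t) = Φ₋(a+t) for a.e. t ∈ ℝ. Then Φ₊ and Φ₋ are uniquely determined (a.e.) on all of ℝ by their restrictions to (a,b); i.e., if two such pairs agree a.e. on (a,b), they agree a.e. on ℝ. -/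
open MeasureTheory Set

/-!
The reflection conditions say `Φ₋(x) = Φ₊(2b - x) = Φ₊(2a - x)` a.e., so the agreement sets
`{Φ₊ = Ψ₊}` and `{Φ₋ = Ψ₋}` are exchanged by both reflections `x ↦ 2a - x` and `x ↦ 2b - x`.
Their composition is the translation by `2l`, so `{Φ₊ = Ψ₊}` is a.e. `2l`-periodic. On `(a, b)` it
holds by assumption, and on `(b, 2b - a)` it is the mirror image in `b` of `{Φ₋ = Ψ₋} ⊇ (a, b)`;
these two intervals fill a whole period, hence `Φ₊ = Ψ₊` a.e., and reflecting once more
gives `Φ₋ = Ψ₋` a.e.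
-/

lemma ae_comp_add_right {p : ℝ → Prop} (c : ℝ) (h : ∀ᵐ x : ℝ, p x) : ∀ᵐ x : ℝ, p (x + c) :=
  (measurePreserving_add_right volume c).quasiMeasurePreserving.ae h

lemma ae_comp_sub_left {p : ℝ → Prop} (c : ℝ) (h : ∀ᵐ x : ℝ, p x) : ∀ᵐ x : ℝ, p (c - x) :=
  (Measure.measurePreserving_sub_left volume c).quasiMeasurePreserving.ae h

lemma ae_eq_iff_eq_reflect {β : Type*} {f g f' g' : ℝ → β} {c : ℝ}
    (h : ∀ᵐ t : ℝ, f (c - t) = g (c + t)) (h' : ∀ᵐ t : ℝ, f' (c - t) = g' (c + t)) :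
    ∀ᵐ x : ℝ, g x = g' x ↔ f (2 * c - x) = f' (2 * c - x) := by
  filter_upwards [ae_comp_add_right (-c) h, ae_comp_add_right (-c) h'] with x hx hx'
  rw [show c - (x + -c) = 2 * c - x by ring, show c + (x + -c) = x by ring] at hx hx'
  rw [hx, hx']

lemma ae_periodic_of_reflect {P Q : ℝ → Prop} {a b : ℝ}
    (ha : ∀ᵐ x : ℝ, Q x ↔ P (2 * a - x)) (hb : ∀ᵐ x : ℝ, Q x ↔ P (2 * b - x)) :
    ∀ᵐ x : ℝ, P (x + 2 * (b - a)) ↔ P x := by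
  filter_upwards [ae_comp_sub_left (2 * a) ha, ae_comp_sub_left (2 * a) hb] with x hxa hxb
  rw [show 2 * a - (2 * a - x) = x by ring] at hxa
  rw [show 2 * b - (2 * a - x) = x + 2 * (b - a) by ring] at hxb
  rw [← hxa, hxb]

lemma ae_periodic_zsmul {P : ℝ → Prop} {T : ℝ} (h : ∀ᵐ x : ℝ, P (x + T) ↔ P x) (n : ℤ) :
    ∀ᵐ x : ℝ, P (x + n • T) ↔ P x := by
  induction n using Int.induction_on with
  | zero => simp
  | succ n ih =>
    filter_upwards [ae_comp_add_right ((n : ℤ) • T) h, ih] with x h1 h2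
    rw [add_zsmul, one_zsmul, ← add_assoc, h1, h2]
  | pred n ih =>
    filter_upwards [ae_comp_add_right ((-n - 1 : ℤ) • T) h, ih] with x h1 h2
    rw [← h1, add_assoc, ← add_one_zsmul, sub_add_cancel, h2]

lemma ae_of_ae_periodic_of_ae_Ico {P : ℝ → Prop} {T : ℝ} (hT : 0 < T)
    (hper : ∀ᵐ x : ℝ, P (x + T) ↔ P x) {c : ℝ} (h : ∀ᵐ x : ℝ, x ∈ Ico c (c + T) → P x) :
    ∀ᵐ x : ℝ, P x := by
  have hshift : ∀ᵐ x : ℝ, ∀ n : ℤ, (x + n • T ∈ Ico c (c + T) → P (x + n • T)) ∧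
      (P (x + n • T) ↔ P x) :=
    ae_all_iff.mpr fun n => (ae_comp_add_right (n • T) h).and (ae_periodic_zsmul hper n)
  filter_upwards [hshift] with x hx
  obtain ⟨n, hn, -⟩ := existsUnique_add_zsmul_mem_Ico hT x c
  exact ((hx n).2).mp ((hx n).1 hn)

lemma ae_Ico_of_ae_Ioo {α : Type*} [LinearOrder α] [MeasurableSpace α] {μ : Measure α}
    [NullSingletonClass μ] {P : α → Prop} {a b c : α} (hab : ∀ᵐ x ∂μ, x ∈ Ioo a b → P x)
    (hbc : ∀ᵐ x ∂μ, x ∈ Ioo b c → P x) : ∀ᵐ x ∂μ, x ∈ Ico a c → P x := by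
  filter_upwards [hab, hbc, μ.ae_ne a, μ.ae_ne b] with x h1 h2 hxa hxb hx
  rcases lt_or_gt_of_ne hxb with hlt | hgt
  · exact h1 ⟨lt_of_le_of_ne hx.1 hxa.symm, hlt⟩
  · exact h2 ⟨hgt, hx.2⟩

theorem uniqueness_by_reflection_general (a b : ℝ) (hab : a < b)
    (Φp Φm Ψp Ψm : ℝ → ℝ)
    (hreflΦ1 : ∀ᵐ t : ℝ, Φp (b - t) = Φm (b + t))
    (hreflΦ2 : ∀ᵐ t : ℝ, Φp (a - t) = Φm (a + t))
    (hreflΨ1 : ∀ᵐ t : ℝ, Ψp (b - t) = Ψm (b + t))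
    (hreflΨ2 : ∀ᵐ t : ℝ, Ψp (a - t) = Ψm (a + t))
    (hagreep : ∀ᵐ x ∂(volume.restrict (Ioo a b)), Φp x = Ψp x)
    (hagreem : ∀ᵐ x ∂(volume.restrict (Ioo a b)), Φm x = Ψm x) :
    (∀ᵐ x : ℝ, Φp x = Ψp x) ∧ (∀ᵐ x : ℝ, Φm x = Ψm x) := by
  have hrefl_a := ae_eq_iff_eq_reflect hreflΦ2 hreflΨ2
  have hrefl_b := ae_eq_iff_eq_reflect hreflΦ1 hreflΨ1
  have hp_ab := (ae_restrict_iff' measurableSet_Ioo).mp hagreep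
  have hm_ab := (ae_restrict_iff' measurableSet_Ioo).mp hagreem
  have hp_mirror : ∀ᵐ x : ℝ, x ∈ Ioo b (2 * b - a) → Φp x = Ψp x := by
    filter_upwards [ae_comp_sub_left (2 * b) hm_ab, ae_comp_sub_left (2 * b) hrefl_b]
      with x hm hrefl hx
    rw [show 2 * b - (2 * b - x) = x by ring] at hrefl
    exact hrefl.mp (hm ⟨by linarith [hx.2], by linarith [hx.1]⟩)
  have hp : ∀ᵐ x : ℝ, Φp x = Ψp x := by
    refine ae_of_ae_periodic_of_ae_Ico (c := a) (by linarith)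
      (ae_periodic_of_reflect (P := fun x => Φp x = Ψp x) hrefl_a hrefl_b) ?_
    rw [show a + 2 * (b - a) = 2 * b - a by ring]
    exact ae_Ico_of_ae_Ioo hp_ab hp_mirror
  refine ⟨hp, ?_⟩
  filter_upwards [hrefl_b, ae_comp_sub_left (2 * b) hp] with x hrefl hpx
  exact hrefl.mpr hpx

/-- Uniqueness by reflection: a pair `(Φ₊, Φ₋)` of measurable functions satisfying the
reflection conditions `Φ₊(b-t) = Φ₋(b+t)` and `Φ₊(a-t) = Φ₋(a+t)` for a.e. `t` is
determined a.e. on all of `ℝ` by its restriction to `(a,b)`. -/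
theorem uniqueness_by_reflection (a b : ℝ) (hab : a < b)
    (Φp Φm Ψp Ψm : ℝ → ℝ)
    (hΦp : Measurable Φp) (hΦm : Measurable Φm)
    (hΨp : Measurable Ψp) (hΨm : Measurable Ψm)
    (hreflΦ1 : ∀ᵐ t : ℝ, Φp (b - t) = Φm (b + t))
    (hreflΦ2 : ∀ᵐ t : ℝ, Φp (a - t) = Φm (a + t))
    (hreflΨ1 : ∀ᵐ t : ℝ, Ψp (b - t) = Ψm (b + t))
    (hreflΨ2 : ∀ᵐ t : ℝ, Ψp (a - t) = Ψm (a + t))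
    (hagreep : ∀ᵐ x ∂(volume.restrict (Ioo a b)), Φp x = Ψp x)
    (hagreem : ∀ᵐ x ∂(volume.restrict (Ioo a b)), Φm x = Ψm x) :
    (∀ᵐ x : ℝ, Φp x = Ψp x) ∧ (∀ᵐ x : ℝ, Φm x = Ψm x) :=
  uniqueness_by_reflection_general a b hab Φp Φm Ψp Ψm hreflΦ1 hreflΦ2 hreflΨ1 hreflΨ2 hagreep
    hagreem
end

section
/- Let V : ℝ → ℝ be continuous and E ∈ ℝ. Suppose a is an endpoint of a connected component (a_n, b_n) of the open set B_E = {x : V(x) < E}, and suppose a is a Lebesgue point of V' (V locally absolutely continuous) with V'(a) ≠ 0. Then V is strictly monotone on some neighborhood of a; in particular there exists ε > 0 such that B_E ∩ (a − ε, a) = ∅ or B_E ∩ (a, a+ε) ⊆ (a_n, b_n) appropriately, i.e. the component is isolated from B_E on the outer side near a. -/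
open MeasureTheory Set Filter

/-- At a left endpoint `a` of a connected component `(a, bn)` of `B_E = {V < E}`,
if `a` is a Lebesgue point of `V'` with `V'(a) ≠ 0` (for `V` locally absolutely
continuous), then `V'(a) < 0`, `V` is strictly monotone through `a` on a
neighborhood, and the component is isolated from `B_E` on the outer side near `a`. -/
theorem component_isolated_at_lebesgue_point (V V' : ℝ → ℝ) (E a bn : ℝ) (habn : a < bn)
    (hV' : LocallyIntegrable V' volume)
    (hFTC : ∀ x : ℝ, V x = V 0 + ∫ t in (0:ℝ)..x, V' t)
    (hVa : V a = E)
    (hcomp : ∀ x ∈ Ioo a bn, V x < E)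
    (hLeb : Tendsto (fun ε : ℝ => (1 / (2 * ε)) * ∫ y in (a - ε)..(a + ε), |V' y - V' a|)
      (nhdsWithin 0 (Ioi 0)) (nhds 0))
    (hne : V' a ≠ 0) :
    V' a < 0 ∧ ∃ ε > 0,
      (∀ x ∈ Ioo (a - ε) a, V a < V x) ∧
      (∀ x ∈ Ioo a (a + ε), V x < V a) ∧
      {x : ℝ | V x < E} ∩ Ioo (a - ε) a = ∅ := by
  set c := V' a with hc
  have hInt : ∀ p q : ℝ, IntervalIntegrable V' volume p q := fun p q =>
    (hV'.integrableOn_isCompact isCompact_uIcc).intervalIntegrable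
  have hIntAbs : ∀ p q : ℝ, IntervalIntegrable (fun t => |V' t - c|) volume p q := by
    intro p q
    exact (((hV'.sub (locallyIntegrable_const c)).integrableOn_isCompact isCompact_uIcc).intervalIntegrable).abs
  have hdiff : ∀ x : ℝ, V x - V a = ∫ t in a..x, V' t := by
    intro x
    have h1 := intervalIntegral.integral_add_adjacent_intervals (hInt 0 a) (hInt a x)
    rw [hFTC x, hFTC a]
    linarith
  have habs : 0 < |c| := abs_pos.mpr hne
  set η := |c| / 4 with hη
  have hηpos : 0 < η := by positivity
  obtain ⟨ε0, hε0, hball⟩ := Metric.tendsto_nhdsWithin_nhds.mp hLeb η hηpos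
  -- key estimate
  have hest : ∀ x : ℝ, x ≠ a → |x - a| < ε0 →
      |(V x - V a) - (x - a) * c| ≤ 2 * |x - a| * η := by
    intro x hxne hxlt
    set δ := |x - a| with hδ
    have hδpos : 0 < δ := abs_pos.mpr (sub_ne_zero.mpr hxne)
    have hIbig : (∫ y in (a - δ)..(a + δ), |V' y - c|) < 2 * δ * η := by
      have h := hball (x := δ) hδpos (by simpa [Real.dist_eq, abs_of_pos hδpos] using hxlt)
      rw [Real.dist_eq, sub_zero] at h
      have hInn : 0 ≤ ∫ y in (a - δ)..(a + δ), |V' y - c| :=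
        intervalIntegral.integral_nonneg (by linarith) (fun t _ => abs_nonneg _)
      have h2 : (1 / (2 * δ)) * ∫ y in (a - δ)..(a + δ), |V' y - c| < η :=
        lt_of_le_of_lt (le_abs_self _) h
      have h2δ : (0:ℝ) < 2 * δ := by linarith
      rw [one_div, inv_mul_eq_div, div_lt_iff₀ h2δ] at h2
      nlinarith [h2]
    have hsplit := intervalIntegral.integral_add_adjacent_intervals
      (hIntAbs (a - δ) a) (hIntAbs a (a + δ))
    have hleft : 0 ≤ ∫ y in (a - δ)..a, |V' y - c| :=
      intervalIntegral.integral_nonneg (by linarith) (fun t _ => abs_nonneg _)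
    have hright : 0 ≤ ∫ y in a..(a + δ), |V' y - c| :=
      intervalIntegral.integral_nonneg (by linarith) (fun t _ => abs_nonneg _)
    have hrepr : (V x - V a) - (x - a) * c = ∫ t in a..x, (V' t - c) := by
      rw [intervalIntegral.integral_sub (hInt a x) (intervalIntegrable_const),
        intervalIntegral.integral_const, hdiff x]
      simp [smul_eq_mul]
    rw [hrepr]
    rcases lt_or_gt_of_ne hxne with hlt | hgt
    · -- x < a, δ = a - x
      have hδeq : δ = a - x := by rw [hδ, abs_of_neg (by linarith : x - a < 0)]; ring
      have : (∫ t in a..x, (V' t - c)) = -∫ t in x..a, (V' t - c) := by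
        rw [intervalIntegral.integral_symm]
      rw [this, abs_neg]
      have hb : |∫ t in x..a, (V' t - c)| ≤ ∫ t in x..a, |V' t - c| := by
        simpa [Real.norm_eq_abs] using
          intervalIntegral.norm_integral_le_integral_norm (f := fun t => V' t - c)
            (le_of_lt hlt)
      have hxa : (∫ t in x..a, |V' t - c|) ≤ ∫ y in (a - δ)..(a + δ), |V' y - c| := by
        have : x = a - δ := by linarith
        rw [this]; linarith
      linarith
    · -- a < x, δ = x - a
      have hδeq : δ = x - a := by rw [hδ, abs_of_pos (by linarith : 0 < x - a)]
      have hb : |∫ t in a..x, (V' t - c)| ≤ ∫ t in a..x, |V' t - c| := by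
        simpa [Real.norm_eq_abs] using
          intervalIntegral.norm_integral_le_integral_norm (f := fun t => V' t - c)
            (le_of_lt hgt)
      have hxa : (∫ t in a..x, |V' t - c|) ≤ ∫ y in (a - δ)..(a + δ), |V' y - c| := by
        have : x = a + δ := by linarith
        rw [this]; linarith
      linarith
  -- simplify 2*|x-a|*η = |x-a|*|c|/2
  have hest' : ∀ x : ℝ, x ≠ a → |x - a| < ε0 →
      (x - a) * c - |x - a| * |c| / 2 ≤ V x - V a ∧
      V x - V a ≤ (x - a) * c + |x - a| * |c| / 2 := by
    intro x h1 h2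
    have h := hest x h1 h2
    rw [hη] at h
    have h' := abs_le.mp h
    constructor <;> nlinarith [h'.1, h'.2]
  -- V' a < 0
  have hcneg : c < 0 := by
    by_contra hpos
    push_neg at hpos
    have hcpos : 0 < c := lt_of_le_of_ne hpos (Ne.symm hne)
    set x := a + min ε0 (bn - a) / 2 with hx
    have hmin : 0 < min ε0 (bn - a) := lt_min hε0 (by linarith)
    have hxgt : a < x := by rw [hx]; linarith
    have hxlt : x < bn := by
      have : min ε0 (bn - a) ≤ bn - a := min_le_right _ _
      rw [hx]; linarith
    have hxε : |x - a| < ε0 := by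
      rw [abs_of_pos (by linarith : (0:ℝ) < x - a)]
      have : min ε0 (bn - a) ≤ ε0 := min_le_left _ _
      rw [hx]; linarith
    have hVx : V x < E := hcomp x ⟨hxgt, hxlt⟩
    have := (hest' x (by linarith) hxε).1
    rw [abs_of_pos (by linarith : (0:ℝ) < x - a), abs_of_pos hcpos] at this
    nlinarith
  have habsc : |c| = -c := abs_of_neg hcneg
  refine ⟨hcneg, ε0, hε0, ?_, ?_, ?_⟩
  · rintro x ⟨h1, h2⟩
    have hxε : |x - a| < ε0 := by rw [abs_of_neg (by linarith : x - a < 0)]; linarith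
    have := (hest' x (by linarith) hxε).1
    rw [abs_of_neg (by linarith : x - a < 0), habsc] at this
    nlinarith
  · rintro x ⟨h1, h2⟩
    have hxε : |x - a| < ε0 := by rw [abs_of_pos (by linarith : 0 < x - a)]; linarith
    have := (hest' x (by linarith) hxε).2
    rw [abs_of_pos (by linarith : 0 < x - a), habsc] at this
    nlinarith
  · by_contra hne'
    obtain ⟨x, hVx, h1, h2⟩ := Set.nonempty_iff_ne_empty.mpr hne'
    simp only [Set.mem_setOf_eq] at hVx
    have hxε : |x - a| < ε0 := by rw [abs_of_neg (by linarith : x - a < 0)]; linarith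
    have := (hest' x (by linarith) hxε).1
    rw [abs_of_neg (by linarith : x - a < 0), habsc] at this
    nlinarith
end

section
/- Let V : ℝ → ℝ be locally absolutely continuous and continuous. Then for almost every E ∈ ℝ, every connected component (a_n,b_n) of the open set B_E = {x : V(x) < E} admits ε_n > 0 with B_E ∩ (a_n − ε_n, b_n + ε_n) = (a_n, b_n). -/
/-!
Let `N` be the set of points where `V` fails to have derivative `V'`, or has derivative `0`.
Then `V '' N` is null. The first part of `N` is null by Lebesgue differentiation, and `V` maps
null sets to null sets because `λ (V '' s) ≤ ∫⁻ x in s, ‖V' x‖ₑ`: for an interval this is the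
fundamental theorem of calculus, for an open set sum over its countably many components, and in
general use outer regularity of the measure `‖V'‖ₑ • λ`. The second part is handled by Sard's
lemma. For `E ∉ V '' N`, an endpoint `a` of a component of `{V < E}` has `V a = E` and
`V' a ≠ 0`; as `V < E` just right of `a`, `V' a < 0`, so `V > E` just left of `a`, and similarly
at `b`.
-/

open MeasureTheory Set Filter Topology
open scoped ENNReal

section ImageMeasure

variable {X Y : Type*} [TopologicalSpace X] [MeasurableSpace X] [MeasurableSpace Y]
  {μ : Measure X} {ν : Measure Y} {f : X → Y}

theorem IsOpen.measure_image_le_of_isPreconnected [LocallyConnectedSpace X]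
    [TopologicalSpace.SeparableSpace X] [OpensMeasurableSpace X] {U : Set X} (hU : IsOpen U)
    (h : ∀ c, IsPreconnected c → IsOpen c → ν (f '' c) ≤ μ c) :
    ν (f '' U) ≤ μ U := by
  set T : Set (Set X) := connectedComponentIn U '' U
  have hUT : U = ⋃₀ T := by
    ext z
    refine ⟨fun hz => ⟨_, mem_image_of_mem _ hz, mem_connectedComponentIn hz⟩, ?_⟩
    rintro ⟨-, ⟨x, -, rfl⟩, hz⟩
    exact connectedComponentIn_subset U x hz
  have hTopen : ∀ c ∈ T, IsOpen c := by
    rintro - ⟨x, -, rfl⟩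
    exact hU.connectedComponentIn
  have hTdisj : T.PairwiseDisjoint id := by
    rintro - ⟨x, -, rfl⟩ - ⟨y, -, rfl⟩ hne
    refine disjoint_left.2 fun z hzx hzy => hne ?_
    exact (connectedComponentIn_eq hzx).trans (connectedComponentIn_eq hzy).symm
  have hTc : T.Countable := hTdisj.countable_of_isOpen hTopen <| by
    rintro - ⟨x, hx, rfl⟩
    exact connectedComponentIn_nonempty_iff.2 hx
  calc ν (f '' U) = ν (⋃ c ∈ T, f '' c) := by rw [hUT, sUnion_eq_biUnion, image_iUnion₂]
    _ ≤ ∑' c : T, ν (f '' c) := measure_biUnion_le ν hTc _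
    _ ≤ ∑' c : T, μ c := by
        refine ENNReal.tsum_le_tsum fun ⟨c, hc⟩ => h c ?_ (hTopen c hc)
        obtain ⟨x, -, rfl⟩ := hc
        exact isPreconnected_connectedComponentIn
    _ = μ U := by
        rw [hUT, measure_sUnion hTc hTdisj fun c hc => (hTopen c hc).measurableSet]

theorem measure_image_le_of_forall_isOpen [μ.OuterRegular]
    (h : ∀ U, IsOpen U → ν (f '' U) ≤ μ U) (s : Set X) : ν (f '' s) ≤ μ s := by
  rw [s.measure_eq_iInf_isOpen μ]
  exact le_iInf₂ fun U hsU => le_iInf fun hU => (measure_mono (image_mono hsU)).trans (h U hU)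

end ImageMeasure

theorem MeasureTheory.LocallyIntegrable.isLocallyFiniteMeasure_withDensity_enorm
    {α E : Type*} [MeasurableSpace α] [TopologicalSpace α] [NormedAddCommGroup E]
    {μ : Measure α} [SFinite μ] {f : α → E} (hf : LocallyIntegrable f μ) :
    IsLocallyFiniteMeasure (μ.withDensity fun x => ‖f x‖ₑ) := by
  refine ⟨fun x => ?_⟩
  obtain ⟨s, hs, hfs⟩ := hf x
  exact ⟨s, hs, by rw [withDensity_apply' _ s]; exact hfs.2⟩

theorem volume_image_setOf_hasDerivAt_zero (f : ℝ → ℝ) :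
    volume (f '' {x | HasDerivAt f 0 x}) = 0 :=
  addHaar_image_eq_zero_of_det_fderivWithin_eq_zero volume (f' := fun _ => 0)
    (fun _ hx => by simpa using hx.hasFDerivAt.hasFDerivWithinAt) fun _ _ => by simp

section Primitive

variable {f f' : ℝ → ℝ} (hf' : LocallyIntegrable f' volume)
  (hf : ∀ x, f x = f 0 + ∫ t in (0 : ℝ)..x, f' t)
include hf' hf

theorem continuous_of_eq_add_integral : Continuous f := by
  rw [funext hf]
  exact continuous_const.add (intervalIntegral.continuous_primitive
    (fun _ _ => (hf'.integrableOn_isCompact isCompact_uIcc).intervalIntegrable) 0)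

theorem ae_hasDerivAt_of_eq_add_integral : ∀ᵐ x, HasDerivAt f (f' x) x := by
  filter_upwards [LocallyIntegrable.ae_hasDerivAt_integral hf'] with x hx
  rw [funext hf]
  exact (hx 0).const_add _

theorem integral_eq_sub_of_eq_add_integral (x y : ℝ) : ∫ t in x..y, f' t = f y - f x := by
  rw [hf x, hf y, ← intervalIntegral.integral_interval_sub_left
    (hf'.integrableOn_isCompact isCompact_uIcc).intervalIntegrable
    (hf'.integrableOn_isCompact isCompact_uIcc).intervalIntegrable]
  ring

theorem edist_le_withDensity_Ioc {x y : ℝ} (hxy : x ≤ y) :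
    edist (f x) (f y) ≤ volume.withDensity (fun t => ‖f' t‖ₑ) (Ioc x y) := by
  rw [withDensity_apply _ measurableSet_Ioc, edist_comm, edist_eq_enorm_sub,
    ← integral_eq_sub_of_eq_add_integral hf' hf, intervalIntegral.integral_of_le hxy]
  exact enorm_integral_le_lintegral_enorm _

theorem volume_image_le_withDensity_of_isPreconnected {c : Set ℝ} (hc : IsPreconnected c) :
    volume (f '' c) ≤ volume.withDensity (fun t => ‖f' t‖ₑ) c := by
  refine (Real.volume_le_diam _).trans (Metric.ediam_le ?_)
  rintro - ⟨x, hx, rfl⟩ - ⟨y, hy, rfl⟩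
  wlog hxy : x ≤ y generalizing x y
  · rw [edist_comm]
    exact this y hy x hx (le_of_not_ge hxy)
  exact (edist_le_withDensity_Ioc hf' hf hxy).trans
    (measure_mono (Ioc_subset_Icc_self.trans (hc.ordConnected.out hx hy)))

theorem volume_image_le_withDensity (s : Set ℝ) :
    volume (f '' s) ≤ volume.withDensity (fun t => ‖f' t‖ₑ) s := by
  have := hf'.isLocallyFiniteMeasure_withDensity_enorm
  refine measure_image_le_of_forall_isOpen (fun U hU => ?_) s
  exact hU.measure_image_le_of_isPreconnected
    fun c hc _ => volume_image_le_withDensity_of_isPreconnected hf' hf hc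

theorem volume_image_eq_zero_of_eq_add_integral {s : Set ℝ} (hs : volume s = 0) :
    volume (f '' s) = 0 :=
  nonpos_iff_eq_zero.mp <| (volume_image_le_withDensity hf' hf s).trans_eq
    (withDensity_absolutelyContinuous _ _ hs)

end Primitive

section Transversal

variable {f : ℝ → ℝ} {f' a : ℝ}

theorem HasDerivAt.eventually_nhdsLT_lt_or_eventually_nhdsGT_lt (hf : HasDerivAt f f' a)
    (hf' : f' ≠ 0) : (∀ᶠ x in 𝓝[<] a, f a < f x) ∨ ∀ᶠ x in 𝓝[>] a, f a < f x := by
  have hs := hasDerivAt_iff_tendsto_slope.mp hf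
  rcases hf'.lt_or_gt with hneg | hpos
  · left
    filter_upwards [self_mem_nhdsWithin,
      (hs.mono_left (nhdsLT_le_nhdsNE a)).eventually (eventually_lt_nhds hneg)] with x hx hslope
    rwa [slope_comm, slope_neg_iff_of_le (le_of_lt hx)] at hslope
  · right
    filter_upwards [self_mem_nhdsWithin,
      (hs.mono_left (nhdsGT_le_nhdsNE a)).eventually (eventually_gt_nhds hpos)] with x hx hslope
    exact (slope_pos_iff_of_le (le_of_lt hx)).mp hslope

theorem HasDerivAt.eventually_nhdsLT_lt (hf : HasDerivAt f f' a) (hf' : f' ≠ 0)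
    (h : ∀ᶠ x in 𝓝[>] a, f x < f a) : ∀ᶠ x in 𝓝[<] a, f a < f x :=
  (hf.eventually_nhdsLT_lt_or_eventually_nhdsGT_lt hf').resolve_right fun h' =>
    let ⟨_, hx, hx'⟩ := (h.and h').exists
    lt_asymm hx hx'

theorem HasDerivAt.eventually_nhdsGT_lt (hf : HasDerivAt f f' a) (hf' : f' ≠ 0)
    (h : ∀ᶠ x in 𝓝[<] a, f x < f a) : ∀ᶠ x in 𝓝[>] a, f a < f x :=
  (hf.eventually_nhdsLT_lt_or_eventually_nhdsGT_lt hf').resolve_left fun h' =>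
    let ⟨_, hx, hx'⟩ := (h.and h').exists
    lt_asymm hx hx'

end Transversal

theorem exists_pos_inter_Ioo_sub_add_eq {s : Set ℝ} {a b : ℝ} (hs : Ioo a b ⊆ s)
    (ha : a ∉ s) (hb : b ∉ s) (hl : ∀ᶠ x in 𝓝[<] a, x ∉ s) (hr : ∀ᶠ x in 𝓝[>] b, x ∉ s) :
    ∃ ε > 0, s ∩ Ioo (a - ε) (b + ε) = Ioo a b := by
  obtain ⟨l, hla, hl⟩ := mem_nhdsLT_iff_exists_Ioo_subset.mp hl
  obtain ⟨r, hbr, hr⟩ := mem_nhdsGT_iff_exists_Ioo_subset.mp hr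
  have hl' := min_le_left (a - l) (r - b)
  have hr' := min_le_right (a - l) (r - b)
  have hε : 0 < min (a - l) (r - b) := lt_min (sub_pos.2 hla) (sub_pos.2 hbr)
  refine ⟨_, hε, subset_antisymm ?_ fun x hx => ⟨hs hx, by linarith [hx.1], by linarith [hx.2]⟩⟩
  rintro x ⟨hxs, hx1, hx2⟩
  refine ⟨lt_of_not_ge fun hxa => ?_, lt_of_not_ge fun hbx => ?_⟩
  · rcases hxa.lt_or_eq with hxa | rfl
    exacts [hl ⟨by linarith, hxa⟩ hxs, ha hxs]
  · rcases hbx.lt_or_eq with hbx | rfl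
    exacts [hr ⟨hbx, by linarith⟩ hxs, hb hxs]

/-- For `V` locally absolutely continuous, for a.e. energy `E` every bounded connected
component `(a,b)` of the open sublevel set `B_E = {V < E}` admits `ε > 0` with
`B_E ∩ (a-ε, b+ε) = (a,b)`. -/
theorem components_isolated_ae_energy (V V' : ℝ → ℝ)
    (hV' : LocallyIntegrable V' volume)
    (hFTC : ∀ x : ℝ, V x = V 0 + ∫ t in (0:ℝ)..x, V' t) :
    ∀ᵐ E : ℝ, ∀ a b : ℝ, a < b →
      Ioo a b ⊆ {x : ℝ | V x < E} → ¬ (V a < E) → ¬ (V b < E) →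
      ∃ ε > 0, {x : ℝ | V x < E} ∩ Ioo (a - ε) (b + ε) = Ioo a b := by
  set N := {x | ¬ HasDerivAt V (V' x) x} ∪ {x | HasDerivAt V 0 x}
  have hN : volume (V '' N) = 0 := by
    rw [image_union]
    exact measure_union_null (volume_image_eq_zero_of_eq_add_integral hV' hFTC
      (ae_hasDerivAt_of_eq_add_integral hV' hFTC)) (volume_image_setOf_hasDerivAt_zero V)
  filter_upwards [measure_eq_zero_iff_ae_notMem.mp hN] with E hE a b hab hsub ha hb
  have hle : Icc a b ⊆ {x | V x ≤ E} := closure_Ioo hab.ne ▸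
    (closure_mono hsub).trans (closure_lt_subset_le (continuous_of_eq_add_integral hV' hFTC)
      continuous_const)
  have hreg : ∀ x, V x = E → HasDerivAt V (V' x) x ∧ V' x ≠ 0 := by
    intro x hx
    have hxN : x ∉ N := fun h => hE ⟨x, h, hx⟩
    simp only [N, mem_union, mem_ofPred_eq, not_or, not_not] at hxN
    exact ⟨hxN.1, fun h0 => hxN.2 (h0 ▸ hxN.1)⟩
  have hVa : V a = E := le_antisymm (hle (left_mem_Icc.2 hab.le)) (not_lt.1 ha)
  have hVb : V b = E := le_antisymm (hle (right_mem_Icc.2 hab.le)) (not_lt.1 hb)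
  refine exists_pos_inter_Ioo_sub_add_eq hsub ha hb ?_ ?_
  · obtain ⟨hd, hne⟩ := hreg a hVa
    have hright : ∀ᶠ x in 𝓝[>] a, V x < V a := hVa ▸ mem_of_superset (Ioo_mem_nhdsGT hab) hsub
    exact (hd.eventually_nhdsLT_lt hne hright).mono fun x hx => (hVa ▸ hx).not_gt
  · obtain ⟨hd, hne⟩ := hreg b hVb
    have hleft : ∀ᶠ x in 𝓝[<] b, V x < V b := hVb ▸ mem_of_superset (Ioo_mem_nhdsLT hab) hsub
    exact (hd.eventually_nhdsGT_lt hne hleft).mono fun x hx => (hVb ▸ hx).not_gt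
end
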